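/- Let A ⊆ ℝ^d be a finite set of nonzero vectors and k ∈ [d]. The solution set {x ∈ ℝ^d : a·x ≤ 0 for all a ∈ A} contains a k-dimensional cone (with apex 0) if and only if dim lpos A ≤ d − k. -/

import Mathlib

open scoped RealInnerProductSpace

/-!
Write `C = pos A`, `L = lpos A` and `P = {x | ∀ a ∈ A, ⟪a, x⟫ ≤ 0}` (the polar cone). A cone
inside `P` has dimension at most `dim span P`, and `P` contains `dim span P` independent vectors,
so everything reduces to `span P = Lᗮ`. Clearly `P ⊥ L`. Conversely, `L` is a face of `C`, so
the convex hull of the generators outside `L` misses `L`; separating the two gives `x₀ ∈ Lᗮ` with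
`⟪a, x₀⟫ < 0` for every generator `a ∉ L`. Then `x₀ + ε x ∈ P` for every `x ∈ Lᗮ` and small
`ε > 0`, hence `Lᗮ ⊆ span P`.
-/
/-- The conical hull (set of nonnegative combinations) of a set `V` in `ℝ^d`. -/
def posHull {d : ℕ} (V : Set (EuclideanSpace ℝ (Fin d))) : Set (EuclideanSpace ℝ (Fin d)) :=
  {x | ∃ (s : Finset (EuclideanSpace ℝ (Fin d))) (c : EuclideanSpace ℝ (Fin d) → ℝ),
    ↑s ⊆ V ∧ (∀ v ∈ s, 0 ≤ c v) ∧ x = ∑ v ∈ s, c v • v}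

/-- The lineality set `pos A ∩ (− pos A)` of the conical hull of `A`. -/
def linealitySet {d : ℕ} (A : Set (EuclideanSpace ℝ (Fin d))) : Set (EuclideanSpace ℝ (Fin d)) :=
  posHull A ∩ (-posHull A)

open scoped Topology

theorem PointedCone.disjoint_convexHull_lineal {𝕜 M : Type*} [Field 𝕜] [LinearOrder 𝕜]
    [IsStrictOrderedRing 𝕜] [AddCommGroup M] [Module 𝕜 M] {C : PointedCone 𝕜 M} {t : Finset M}
    (htC : ∀ a ∈ t, a ∈ C) (ht : ∀ a ∈ t, a ∉ C.lineal) :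
    Disjoint (convexHull 𝕜 (t : Set M)) C.lineal := by
  classical
  rw [Set.disjoint_left]
  rintro _ hu hu'
  obtain ⟨w, hw₀, hw₁, rfl⟩ := Finset.mem_convexHull'.1 hu
  obtain ⟨a, ha, hwa⟩ : ∃ a ∈ t, 0 < w a :=
    Finset.exists_lt_of_sum_lt (by rw [hw₁, Finset.sum_const_zero]; exact one_pos)
  rw [← Finset.add_sum_erase t _ ha] at hu'
  refine ht a ha ((IsFaceOf.lineal C).mem_of_smul_add_mem (htC a ha) ?_ hwa hu')
  exact C.sum_mem fun b hb =>
    C.smul_mem (hw₀ b (Finset.mem_of_mem_erase hb)) (htC b (Finset.mem_of_mem_erase hb))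

theorem Submodule.exists_subset_finrank_span_eq {K M : Type*} [DivisionRing K] [AddCommGroup M]
    [Module K M] {s : Set M} [Module.Finite K (span K s)] {k : ℕ}
    (hk : k ≤ Module.finrank K (span K s)) : ∃ t ⊆ s, Module.finrank K (span K t) = k := by
  obtain ⟨t, hts, hcard, -, hli⟩ := exists_finset_span_eq_linearIndepOn K s
  obtain ⟨u, hut, rfl⟩ := Finset.exists_subset_card_eq (hcard ▸ hk)
  exact ⟨u, (Finset.coe_subset.2 hut).trans hts,
    finrank_span_finset_eq_card (hli.mono (Finset.coe_subset.2 hut))⟩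

section PolarCone

variable {E : Type*} [NormedAddCommGroup E] [InnerProductSpace ℝ E]

def polarCone (s : Set E) : Set E := {x | ∀ a ∈ s, ⟪a, x⟫ ≤ 0}

theorem inner_nonpos_of_mem_hull_of_mem_polarCone {s : Set E} {x c : E} (hx : x ∈ polarCone s)
    (hc : c ∈ PointedCone.hull ℝ s) : ⟪c, x⟫ ≤ 0 := by
  induction hc using Submodule.span_induction with
  | mem a ha => exact hx a ha
  | zero => simp
  | add a b _ _ ha hb => rw [inner_add_left]; linarith
  | smul r a _ ha =>
    rw [Nonneg.mk_smul, real_inner_smul_left]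
    exact mul_nonpos_of_nonneg_of_nonpos r.2 ha

theorem polarCone_subset_orthogonal_lineal (s : Set E) :
    polarCone s ⊆ ((PointedCone.hull ℝ s).linealᗮ : Set E) := by
  intro x hx
  rw [SetLike.mem_coe, Submodule.mem_orthogonal]
  rintro y ⟨hy, hy'⟩
  have hneg := inner_nonpos_of_mem_hull_of_mem_polarCone hx hy'
  rw [inner_neg_left] at hneg
  linarith [inner_nonpos_of_mem_hull_of_mem_polarCone hx hy]

variable [FiniteDimensional ℝ E]

theorem exists_mem_orthogonal_lineal_inner_neg (s : Finset E) :
    ∃ x₀ ∈ (PointedCone.hull ℝ (s : Set E)).linealᗮ,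
      ∀ a ∈ s, a ∉ (PointedCone.hull ℝ (s : Set E)).lineal → ⟪a, x₀⟫ < 0 := by
  classical
  set L := (PointedCone.hull ℝ (s : Set E)).lineal
  set t := s.filter (· ∉ L)
  obtain ⟨f, u, v, hfu, huv, hvf⟩ := geometric_hahn_banach_compact_closed
    (convex_convexHull ℝ (t : Set E)) (t.finite_toSet.isCompact_convexHull ℝ)
    L.convex (Submodule.closed_of_finiteDimensional L)
    (PointedCone.disjoint_convexHull_lineal (t := t)
      (fun a ha => PointedCone.subset_hull (Finset.mem_filter.1 ha).1)
      (fun a ha => (Finset.mem_filter.1 ha).2))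
  -- `f` is bounded below on the subspace `L`, so it vanishes there.
  have hfL : ∀ b ∈ L, f b = 0 := by
    intro b hb
    by_contra hfb
    have := hvf ((v / f b) • b) (L.smul_mem _ hb)
    rw [map_smul, smul_eq_mul, div_mul_cancel₀ _ hfb] at this
    exact lt_irrefl _ this
  have hv : v < 0 := by simpa using hvf 0 L.zero_mem
  refine ⟨(InnerProductSpace.toDual ℝ E).symm f, ?_, fun a ha haL => ?_⟩
  · rw [Submodule.mem_orthogonal]
    intro b hb
    rw [real_inner_comm, InnerProductSpace.toDual_symm_apply, hfL b hb]
  · rw [real_inner_comm, InnerProductSpace.toDual_symm_apply]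
    linarith [hfu a (subset_convexHull ℝ _ (Finset.mem_filter.2 ⟨ha, haL⟩))]

theorem orthogonal_lineal_le_span_polarCone (s : Finset E) :
    (PointedCone.hull ℝ (s : Set E)).linealᗮ ≤ Submodule.span ℝ (polarCone (s : Set E)) := by
  intro x hx
  set L := (PointedCone.hull ℝ (s : Set E)).lineal
  obtain ⟨x₀, hx₀L, hx₀⟩ := exists_mem_orthogonal_lineal_inner_neg s
  have hmem : ∀ᶠ ε : ℝ in 𝓝 0, x₀ + ε • x ∈ polarCone (s : Set E) := by
    simp only [polarCone, Finset.mem_coe, Set.mem_ofPred_eq, Filter.eventually_all_finset]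
    intro a ha
    by_cases haL : a ∈ L
    · exact .of_forall fun ε => (Submodule.inner_right_of_mem_orthogonal haL
        (add_mem hx₀L (Lᗮ.smul_mem ε hx))).le
    · refine (ContinuousAt.eventually_lt (by fun_prop) continuousAt_const ?_).mono
        fun _ => le_of_lt
      simpa using hx₀ a ha haL
  obtain ⟨ε, hε, hε0⟩ :=
    ((hmem.filter_mono nhdsWithin_le_nhds).and self_mem_nhdsWithin).exists (f := 𝓝[≠] (0 : ℝ))
  have hx₀P : x₀ ∈ Submodule.span ℝ (polarCone (s : Set E)) :=
    Submodule.subset_span (by simpa using hmem.self_of_nhds)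
  have hxεP : x₀ + ε • x ∈ Submodule.span ℝ (polarCone (s : Set E)) :=
    Submodule.subset_span hε
  rw [show x = ε⁻¹ • ((x₀ + ε • x) - x₀) by
    rw [add_sub_cancel_left, smul_smul, inv_mul_cancel₀ hε0, one_smul]]
  exact Submodule.smul_mem _ _ (Submodule.sub_mem _ hxεP hx₀P)

theorem span_polarCone (s : Finset E) :
    Submodule.span ℝ (polarCone (s : Set E)) = (PointedCone.hull ℝ (s : Set E)).linealᗮ :=
  le_antisymm (Submodule.span_le.2 (polarCone_subset_orthogonal_lineal _))
    (orthogonal_lineal_le_span_polarCone s)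

theorem finrank_span_polarCone_add_finrank_lineal (s : Finset E) :
    Module.finrank ℝ (Submodule.span ℝ (polarCone (s : Set E))) +
      Module.finrank ℝ (PointedCone.hull ℝ (s : Set E)).lineal = Module.finrank ℝ E := by
  rw [span_polarCone, add_comm]
  exact Submodule.finrank_add_finrank_orthogonal _

end PolarCone

theorem posHull_eq_hull {d : ℕ} (V : Set (EuclideanSpace ℝ (Fin d))) :
    posHull V = PointedCone.hull ℝ V := by
  ext x
  constructor
  · rintro ⟨s, c, hsV, hc, rfl⟩
    exact sum_mem fun v hv =>
      (PointedCone.hull ℝ V).smul_mem (hc v hv) (PointedCone.subset_hull (hsV hv))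
  · rw [SetLike.mem_coe, PointedCone.mem_hull_set]
    rintro ⟨c, hcV, hc, rfl⟩
    exact ⟨c.support, c, hcV, fun v _ => hc v, rfl⟩

theorem linealitySet_eq_lineal {d : ℕ} (V : Set (EuclideanSpace ℝ (Fin d))) :
    linealitySet V = (PointedCone.hull ℝ V).lineal := by
  ext x
  simp only [linealitySet, posHull_eq_hull, Set.mem_inter_iff, Set.mem_neg, SetLike.mem_coe,
    PointedCone.mem_lineal]

theorem posHull_subset_polarCone_iff {d : ℕ} {V s : Set (EuclideanSpace ℝ (Fin d))} :
    posHull V ⊆ polarCone s ↔ V ⊆ polarCone s := by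
  refine ⟨fun h => ((posHull_eq_hull V) ▸ PointedCone.subset_hull).trans h, fun h x hx a ha => ?_⟩
  rw [posHull_eq_hull] at hx
  rw [real_inner_comm]
  exact inner_nonpos_of_mem_hull_of_mem_polarCone
    (fun v hv => by rw [real_inner_comm]; exact h hv a ha) hx

theorem solution_cone_iff_lineality_general (d k : ℕ) (hkd : k ≤ d)
    (A : Finset (EuclideanSpace ℝ (Fin d))) :
    (∃ V : Set (EuclideanSpace ℝ (Fin d)),
        Module.finrank ℝ (Submodule.span ℝ V) = k ∧
          posHull V ⊆ {x : EuclideanSpace ℝ (Fin d) | ∀ a ∈ A, ⟪a, x⟫ ≤ 0}) ↔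
      Module.finrank ℝ
        (Submodule.span ℝ (linealitySet (A : Set (EuclideanSpace ℝ (Fin d))))) ≤ d - k := by
  change (∃ V, _ ∧ posHull V ⊆ polarCone (A : Set (EuclideanSpace ℝ (Fin d)))) ↔ _
  have hdim := finrank_span_polarCone_add_finrank_lineal A
  rw [finrank_euclideanSpace_fin] at hdim
  rw [linealitySet_eq_lineal, Submodule.span_eq]
  constructor
  · rintro ⟨V, hVk, hV⟩
    have hVP := posHull_subset_polarCone_iff.1 hV
    have hle := Submodule.finrank_mono (R := ℝ) (Submodule.span_mono hVP)
    omega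
  · intro h
    obtain ⟨V, hVP, hVk⟩ := Submodule.exists_subset_finrank_span_eq (K := ℝ)
      (s := polarCone (A : Set (EuclideanSpace ℝ (Fin d)))) (k := k) (by omega)
    exact ⟨V, hVk, posHull_subset_polarCone_iff.2 hVP⟩

/-- The solution set of `a·x ≤ 0, a ∈ A` contains a `k`-dimensional cone with apex `0`
iff `dim lpos A ≤ d - k`. -/
theorem solution_cone_iff_lineality (d k : ℕ) (hk1 : 1 ≤ k) (hkd : k ≤ d)
    (A : Finset (EuclideanSpace ℝ (Fin d))) (hA : ∀ a ∈ A, a ≠ 0) :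
    (∃ V : Set (EuclideanSpace ℝ (Fin d)),
        Module.finrank ℝ (Submodule.span ℝ V) = k ∧
          posHull V ⊆ {x : EuclideanSpace ℝ (Fin d) | ∀ a ∈ A, ⟪a, x⟫ ≤ 0}) ↔
      Module.finrank ℝ
        (Submodule.span ℝ (linealitySet (A : Set (EuclideanSpace ℝ (Fin d))))) ≤ d - k :=
  solution_cone_iff_lineality_general d k hkd A
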